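/- Let r be a positive integer and let G be a finite nonempty simple graph with r-splitter rank k. Then for every vertex c of G (Connector move), the number of vertices s of G[N_r[c]] that are r-progressing against c is at most (2r+1)^(2^(k-1)-1). -/

import Mathlib

/-!
Call a vertex set critical if deleting any of its vertices lowers its splitter rank. A minimal
subset of `N_r[c]` of the same rank is critical and contains every progressing move, so it
suffices to bound critical sets.

Let `B` be critical of rank `m + 1` and let Connector's best move in `B` be `c`. Deleting a vertex
outside `N_r[c]` would not lower the rank, so `B ⊆ N_r[c]`; fix for every vertex a walk of length
at most `r` from `c`. Take a critical `D ⊆ B` of rank `m` and, for each `x ∈ D`, a critical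
`E x ⊆ B - x` of rank `m`. If `y ≠ c` lies on none of the walks to the vertices of `D` and of
the `E x`, then in `B - y` Connector can still play `c`: after any Splitter move `s`, the set `D`
(or `E s` if `s ∈ D`) survives inside the new ball, so `B - y` still has rank `m + 1`. Hence
`|B| ≤ 1 + r f + r f²` where `f` bounds critical sets of rank `m`, and this recursion stays below
`(2r+1)^(2^m - 1)`.
-/

open Classical

/-- The closed `r`-neighborhood of `c` inside the induced subgraph `G[A]`:
all vertices of `A` joined to `c` by a walk of length at most `r` staying in `A`. -/
noncomputable def ball {V : Type*} (G : SimpleGraph V) (r : ℕ) (A : Finset V) (c : V) :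
    Finset V :=
  A.filter (fun v => ∃ p : G.Walk c v, p.length ≤ r ∧ ∀ x ∈ p.support, x ∈ A)

/-- The `r`-splitter rank of the induced subgraph `G[A]` (with `rank ∅ = 0`). -/
noncomputable def splitterRank {V : Type*} [DecidableEq V] (G : SimpleGraph V) (r : ℕ)
    (A : Finset V) : ℕ :=
  if _ : A.Nonempty then
    1 + A.attach.sup (fun c =>
      (ball G r A c.1).attach.inf'
        (Finset.attach_nonempty_iff.2 ⟨c.1, Finset.mem_filter.2 ⟨c.2,
          SimpleGraph.Walk.nil, by simp, by simp [c.2]⟩⟩)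
        (fun s => splitterRank G r ((ball G r A c.1).erase s.1)))
  else 0
termination_by A.card
decreasing_by
  exact lt_of_lt_of_le (Finset.card_erase_lt_of_mem s.2)
    (Finset.card_le_card (Finset.filter_subset _ _))

section

variable {V : Type*} {G : SimpleGraph V} {r m n : ℕ} {A B : Finset V} {c v x : V}

theorem mem_ball_self (hc : c ∈ A) : c ∈ ball G r A c :=
  Finset.mem_filter.2 ⟨hc, .nil, by simp, by simp [hc]⟩

theorem ball_subset : ball G r A c ⊆ A := Finset.filter_subset _ _

theorem mem_ball_of_walk (p : G.Walk c v) (hp : p.length ≤ r)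
    (hA : ∀ x ∈ p.support, x ∈ A) :
    v ∈ ball G r A c :=
  Finset.mem_filter.2 ⟨hA v p.end_mem_support, p, hp, hA⟩

theorem ball_mono (h : A ⊆ B) : ball G r A c ⊆ ball G r B c := fun v hv => by
  obtain ⟨p, hp, hA⟩ := (Finset.mem_filter.1 hv).2
  exact mem_ball_of_walk p hp fun x hx => h (hA x hx)

variable [DecidableEq V]

/-- A walk through `x` could be cut at `x`, so walks to other vertices of the ball avoid `x`. -/
theorem ball_erase_of_notMem (hx : x ∉ ball G r A c) : ball G r (A.erase x) c = ball G r A c := by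
  refine (ball_mono (A.erase_subset x)).antisymm fun v hv => ?_
  obtain ⟨p, hp, hA⟩ := (Finset.mem_filter.1 hv).2
  refine mem_ball_of_walk p hp fun y hy => Finset.mem_erase.2 ⟨?_, hA y hy⟩
  rintro rfl
  exact hx (mem_ball_of_walk (p.takeUntil y hy) ((p.length_takeUntil_le_length hy).trans hp)
    fun z hz => hA z (p.support_takeUntil_subset_support hy hz))

theorem exists_card_le_forall_mem_ball_erase (hv : v ∈ ball G r A c) :
    ∃ W : Finset V, W.card ≤ r ∧ ∀ y ∉ W, y ≠ c → v ∈ ball G r (A.erase y) c := by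
  obtain ⟨p, hp, hA⟩ := (Finset.mem_filter.1 hv).2
  refine ⟨p.support.tail.toFinset, ?_, fun y hyW hyc => mem_ball_of_walk p hp fun z hz => ?_⟩
  · calc p.support.tail.toFinset.card ≤ p.support.tail.length := List.toFinset_card_le _
      _ = p.length := by simp
      _ ≤ r := hp
  · refine Finset.mem_erase.2 ⟨?_, hA z hz⟩
    rw [← p.cons_tail_support, List.mem_cons] at hz
    rcases hz with rfl | hz
    · exact hyc.symm
    · exact fun hzy => hyW (hzy ▸ List.mem_toFinset.2 hz)

theorem splitterRank_empty : splitterRank G r ∅ = 0 := by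
  rw [splitterRank]; simp

theorem succ_le_splitterRank_iff : n + 1 ≤ splitterRank G r A ↔
    ∃ c ∈ A, ∀ s ∈ ball G r A c, n ≤ splitterRank G r ((ball G r A c).erase s) := by
  rcases A.eq_empty_or_nonempty with rfl | hA
  · simp [splitterRank_empty]
  rw [splitterRank, dif_pos hA, add_comm 1, Nat.add_le_add_iff_right,
    ← Finset.sup'_eq_sup (Finset.attach_nonempty_iff.2 hA), Finset.le_sup'_iff]
  simp [Finset.le_inf'_iff]

theorem splitterRank_le_succ_iff : splitterRank G r A ≤ n + 1 ↔
    ∀ c ∈ A, ∃ s ∈ ball G r A c, splitterRank G r ((ball G r A c).erase s) ≤ n := by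
  rw [← not_lt, ← Nat.succ_le_iff, succ_le_splitterRank_iff]
  push Not
  simp only [Nat.lt_succ_iff]

theorem splitterRank_pos_iff : 0 < splitterRank G r A ↔ A.Nonempty := by
  simp [← Nat.one_le_iff_ne_zero, Nat.pos_iff_ne_zero, succ_le_splitterRank_iff, Finset.Nonempty]

theorem splitterRank_mono (h : A ⊆ B) : splitterRank G r A ≤ splitterRank G r B := by
  induction B using Finset.strongInduction generalizing A with
  | _ B ih =>
  rcases A.eq_empty_or_nonempty with rfl | hA
  · simp [splitterRank_empty]
  obtain ⟨n, hn⟩ := Nat.exists_eq_add_one.2 (splitterRank_pos_iff.2 (hA.mono h))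
  rw [hn, splitterRank_le_succ_iff]
  intro c hc
  obtain ⟨s, hs, hsn⟩ := splitterRank_le_succ_iff.1 hn.le c (h hc)
  have hlt : (ball G r B c).erase s ⊂ B :=
    (Finset.erase_ssubset hs).trans_le ball_subset
  by_cases hsA : s ∈ ball G r A c
  · exact ⟨s, hsA, (ih _ hlt (Finset.erase_subset_erase s (ball_mono h))).trans hsn⟩
  · refine ⟨c, mem_ball_self hc, (ih _ hlt fun v hv => ?_).trans hsn⟩
    have hv := (Finset.mem_erase.1 hv).2
    exact Finset.mem_erase.2 ⟨fun hvs => hsA (hvs ▸ hv), ball_mono h hv⟩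

theorem mem_of_splitterRank_erase_lt {D : Finset V} {s : V} (hDB : D ⊆ B)
    (hD : splitterRank G r D = splitterRank G r B)
    (hs : splitterRank G r (B.erase s) < splitterRank G r B) : s ∈ D := by
  by_contra hsD
  have := splitterRank_mono (G := G) (r := r) fun v hv =>
    Finset.mem_erase.2 ⟨by rintro rfl; exact hsD hv, hDB hv⟩
  omega

theorem succ_le_splitterRank_erase_of_notMem_ball (hc : c ∈ A) (hx : x ∉ ball G r A c)
    (h : ∀ s ∈ ball G r A c, n ≤ splitterRank G r ((ball G r A c).erase s)) :
    n + 1 ≤ splitterRank G r (A.erase x) := by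
  have hcx : c ≠ x := fun hcx => hx (hcx ▸ mem_ball_self hc)
  exact succ_le_splitterRank_iff.2
    ⟨c, Finset.mem_erase.2 ⟨hcx, hc⟩, by rwa [ball_erase_of_notMem hx]⟩

theorem splitterRank_le_splitterRank_erase_add_one (x : V) :
    splitterRank G r A ≤ splitterRank G r (A.erase x) + 1 := by
  rcases (splitterRank G r A).eq_zero_or_pos with h0 | hpos
  · omega
  obtain ⟨n, hn⟩ := Nat.exists_eq_add_one.2 hpos
  obtain ⟨c, hc, hcn⟩ := succ_le_splitterRank_iff.1 hn.ge
  by_cases hx : x ∈ ball G r A c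
  · calc splitterRank G r A = n + 1 := hn
      _ ≤ splitterRank G r ((ball G r A c).erase x) + 1 := by grw [← hcn x hx]
      _ ≤ splitterRank G r (A.erase x) + 1 := by
        grw [splitterRank_mono (Finset.erase_subset_erase x ball_subset)]
  · have := succ_le_splitterRank_erase_of_notMem_ball hc hx hcn
    omega

theorem succ_le_splitterRank_of_subset_ball {D : Finset V} (E : V → Finset V) (hc : c ∈ A)
    (hD : D ⊆ ball G r A c) (hDn : n ≤ splitterRank G r D)
    (hE : ∀ s ∈ D, E s ⊆ (ball G r A c).erase s ∧ n ≤ splitterRank G r (E s)) :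
    n + 1 ≤ splitterRank G r A := by
  refine succ_le_splitterRank_iff.2 ⟨c, hc, fun s _ => ?_⟩
  by_cases hs : s ∈ D
  · exact (hE s hs).2.trans (splitterRank_mono (hE s hs).1)
  · refine hDn.trans (splitterRank_mono fun v hv => Finset.mem_erase.2 ⟨?_, hD hv⟩)
    rintro rfl
    exact hs hv

variable (G r) in
def IsSplitterCritical (A : Finset V) : Prop :=
  ∀ x ∈ A, splitterRank G r (A.erase x) < splitterRank G r A

theorem exists_isSplitterCritical_subset (hn : n ≤ splitterRank G r B) :
    ∃ D ⊆ B, IsSplitterCritical G r D ∧ splitterRank G r D = n := by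
  obtain ⟨D, hDmin⟩ := Finset.exists_minimal
    (s := B.powerset.filter (n ≤ splitterRank G r ·)) ⟨B, by simpa using hn⟩
  obtain ⟨hDB, hDn⟩ := by simpa using hDmin.prop
  have herase : ∀ x ∈ D, splitterRank G r (D.erase x) < n := fun x hx => by
    by_contra! h
    have := hDmin.le_of_le (y := D.erase x) (by simpa using ⟨(D.erase_subset x).trans hDB, h⟩)
      (D.erase_subset x)
    exact Finset.notMem_erase x D (this hx)
  have hle : splitterRank G r D ≤ n := by
    rcases D.eq_empty_or_nonempty with rfl | ⟨x, hx⟩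
    · simp [splitterRank_empty]
    · have := splitterRank_le_splitterRank_erase_add_one (G := G) (r := r) (A := D) x
      have := herase x hx
      omega
  have hDeq := hle.antisymm hDn
  exact ⟨D, hDB, fun x hx => hDeq ▸ herase x hx, hDeq⟩

theorem IsSplitterCritical.subset_ball (hB : IsSplitterCritical G r B)
    (hrank : splitterRank G r B ≤ m + 1) (hc : c ∈ B)
    (hcm : ∀ s ∈ ball G r B c, m ≤ splitterRank G r ((ball G r B c).erase s)) :
    B ⊆ ball G r B c := fun x hxB => by
  by_contra hx
  have := succ_le_splitterRank_erase_of_notMem_ball hc hx hcm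
  have := hB x hxB
  omega

theorem IsSplitterCritical.card_le (hB : IsSplitterCritical G r B)
    (hrank : splitterRank G r B = m + 1) {F : ℕ}
    (hF : ∀ D, IsSplitterCritical G r D → splitterRank G r D = m → D.card ≤ F) :
    B.card ≤ 1 + r * F + r * F ^ 2 := by
  obtain ⟨c, hc, hcm⟩ := succ_le_splitterRank_iff.1 hrank.ge
  have hW (d) (hd : d ∈ B) := exists_card_le_forall_mem_ball_erase
    (hB.subset_ball hrank.le hc hcm hd)
  choose! W hWcard hW using hW
  obtain ⟨D, hDB, hDcrit, hDm⟩ :=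
    exists_isSplitterCritical_subset (G := G) (r := r) (B := B) (n := m) (by omega)
  have hE (x) (_ : x ∈ D) :
      ∃ E ⊆ B.erase x, IsSplitterCritical G r E ∧ splitterRank G r E = m := by
    refine exists_isSplitterCritical_subset ?_
    have := splitterRank_le_splitterRank_erase_add_one (G := G) (r := r) (A := B) x
    omega
  choose! E hEB hEcrit hEm using hE
  set cover := insert c (D.biUnion fun x => W x ∪ (E x).biUnion W)
  have hcover : B ⊆ cover := fun y hyB => by
    by_contra hy
    simp only [cover, Finset.mem_insert, Finset.mem_biUnion, Finset.mem_union, not_or,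
      not_exists, not_and] at hy
    obtain ⟨hyc, hyW⟩ := hy
    have hmem (d) (hd : d ∈ B) (hdy : y ∉ W d) : d ∈ ball G r (B.erase y) c :=
      hW d hd y hdy hyc
    have := succ_le_splitterRank_of_subset_ball E (Finset.mem_erase.2 ⟨Ne.symm hyc, hc⟩)
      (fun d hd => hmem d (hDB hd) (hyW d hd).1) (hDm ▸ le_rfl)
      fun s hs => ⟨fun d hd => ?_, (hEm s hs).ge⟩
    · have := hB y hyB
      omega
    obtain ⟨hds, hdB⟩ := Finset.mem_erase.1 (hEB s hs hd)
    exact Finset.mem_erase.2 ⟨hds, hmem d hdB ((hyW s hs).2 d hd)⟩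
  calc B.card ≤ cover.card := Finset.card_le_card hcover
    _ ≤ 1 + D.card * (r + F * r) := by
      grw [Finset.card_insert_le, add_comm, Finset.card_biUnion_le_card_mul]
      intro x hx
      grw [Finset.card_union_le, Finset.card_biUnion_le_card_mul _ _ r
        fun d hd => hWcard d (Finset.mem_of_mem_erase (hEB x hx hd)),
        hWcard x (hDB hx), hF _ (hEcrit x hx) (hEm x hx)]
    _ ≤ 1 + F * (r + F * r) := by grw [hF D hDcrit hDm]
    _ = 1 + r * F + r * F ^ 2 := by ring

variable (r) in
def criticalCardBound : ℕ → ℕ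
  | 0 => 0
  | m + 1 => 1 + r * criticalCardBound m + r * criticalCardBound m ^ 2

theorem IsSplitterCritical.card_le_criticalCardBound (hB : IsSplitterCritical G r B) :
    B.card ≤ criticalCardBound r (splitterRank G r B) := by
  generalize hm : splitterRank G r B = m
  induction m generalizing B with
  | zero =>
    rw [← Nat.le_zero, ← not_lt, splitterRank_pos_iff, Finset.not_nonempty_iff_eq_empty] at hm
    simp [hm]
  | succ m ih => exact hB.card_le hm fun D hD hDm => ih hD hDm

theorem criticalCardBound_succ_le (m : ℕ) :
    criticalCardBound r (m + 1) ≤ (2 * r + 1) ^ (2 ^ m - 1) := by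
  induction m with
  | zero => simp [criticalCardBound]
  | succ m ih =>
    set P := (2 * r + 1) ^ (2 ^ m - 1)
    have hP : 1 ≤ P := Nat.one_le_pow _ _ (by omega)
    have hexp : 2 ^ (m + 1) - 1 = 2 * (2 ^ m - 1) + 1 := by
      have := Nat.one_le_two_pow (n := m)
      rw [pow_succ]
      omega
    calc criticalCardBound r (m + 2)
        ≤ 1 + r * P + r * P ^ 2 := by rw [criticalCardBound]; gcongr
      _ ≤ (2 * r + 1) * P ^ 2 := by
        have h1 : 1 ≤ P ^ 2 := Nat.one_le_pow _ _ hP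
        have h2 : r * P ≤ r * P ^ 2 := Nat.mul_le_mul_left r (Nat.le_self_pow two_ne_zero P)
        linarith
      _ = (2 * r + 1) ^ (2 ^ (m + 1) - 1) := by rw [hexp, pow_add, pow_one, pow_mul', mul_comm]

theorem criticalCardBound_le_of_le {m k : ℕ} (hmk : m ≤ k) :
    criticalCardBound r m ≤ (2 * r + 1) ^ (2 ^ (k - 1) - 1) := by
  rcases m with _ | m
  · exact Nat.zero_le _
  calc criticalCardBound r (m + 1) ≤ (2 * r + 1) ^ (2 ^ m - 1) := criticalCardBound_succ_le m
    _ ≤ (2 * r + 1) ^ (2 ^ (k - 1) - 1) :=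
      Nat.pow_le_pow_right (by omega) (Nat.sub_le_sub_right (Nat.pow_le_pow_right two_pos
        (by omega)) 1)

end

theorem progressing_moves_bound_general {V : Type*} [Fintype V] [DecidableEq V]
    (G : SimpleGraph V) (r k : ℕ)
    (hk : splitterRank G r Finset.univ = k) (c : V) :
    ((ball G r Finset.univ c).filter (fun s =>
        splitterRank G r ((ball G r Finset.univ c).erase s) <
          splitterRank G r (ball G r Finset.univ c))).card
      ≤ (2 * r + 1) ^ (2 ^ (k - 1) - 1) := by
  set B := ball G r Finset.univ c
  obtain ⟨D, hDB, hD, hDrank⟩ := exists_isSplitterCritical_subset (le_refl (splitterRank G r B))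
  have hprogressing : B.filter (fun s => splitterRank G r (B.erase s) < splitterRank G r B) ⊆ D :=
    fun s hs => mem_of_splitterRank_erase_lt hDB hDrank (Finset.mem_filter.1 hs).2
  have hBk : splitterRank G r B ≤ k := hk ▸ splitterRank_mono (Finset.subset_univ B)
  calc _ ≤ D.card := Finset.card_le_card hprogressing
    _ ≤ criticalCardBound r (splitterRank G r D) := hD.card_le_criticalCardBound
    _ ≤ _ := criticalCardBound_le_of_le (hDrank ▸ hBk)

/-- If `G` has `r`-splitter rank `k`, then for every Connector move `c` there are at most
`(2r+1)^(2^(k-1)-1)` vertices `s` of `G[N_r[c]]` that are `r`-progressing against `c`. -/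
theorem progressing_moves_bound {V : Type*} [Fintype V] [DecidableEq V] [Nonempty V]
    (G : SimpleGraph V) (r k : ℕ) (hr : 0 < r)
    (hk : splitterRank G r Finset.univ = k) (c : V) :
    ((ball G r Finset.univ c).filter (fun s =>
        splitterRank G r ((ball G r Finset.univ c).erase s) <
          splitterRank G r (ball G r Finset.univ c))).card
      ≤ (2 * r + 1) ^ (2 ^ (k - 1) - 1) :=
  progressing_moves_bound_general G r k hk c
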